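/- Deconcatenation of a half-shuffle: for words u, v with |v| ≥ 1, δ'(u ≻ v) = (u ≻ v) ⊗ e + Σ sh(u₍₁₎ ⊗ v₍₁₎) ⊗ (u₍₂₎ ≻ v₍₂₎), where the sum runs over the deconcatenation components δ'(u) = Σ u₍₁₎⊗u₍₂₎ and δ'(v) = Σ v₍₁₎⊗v₍₂₎ with |v₍₂₎| ≥ 1. -/

import Mathlib

def shuffle {A : Type*} : List A → List A → Multiset (List A)
  | [], w => {w}
  | u, [] => {u}
  | a :: u, b :: v => (shuffle u (b :: v)).map (a :: ·) + (shuffle (a :: u) v).map (b :: ·)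
termination_by u v => u.length + v.length
decreasing_by all_goals simp +arith +decide

/-- The right half-shuffle on words: `u ≻ (v·a) = sh(u ⊗ v)·a`, `u ≻ e = 0`. -/
def succW {A : Type*} (u v : List A) : Multiset (List A) :=
  match v.getLast? with
  | none => 0
  | some a => (shuffle u v.dropLast).map (fun w => w ++ [a])

/-- `u ≻ v` as a polynomial in `K⟨A⟩`. -/
noncomputable def succS {A : Type*} (K : Type*) [CommRing K] [Algebra ℚ K]
    (u v : List A) : List A →₀ K :=
  ((succW u v).map (fun w => Finsupp.single w (1 : K))).sum

/-- `sh(u ⊗ v)` as a polynomial in `K⟨A⟩`. -/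
noncomputable def shS {A : Type*} (K : Type*) [CommRing K] [Algebra ℚ K]
    (u v : List A) : List A →₀ K :=
  ((shuffle u v).map (fun w => Finsupp.single w (1 : K))).sum

/-- The deconcatenation coproduct `δ'(w) = Σ_k w.take k ⊗ w.drop k`, with tensors
modelled as finitely supported functions on pairs of words. -/
noncomputable def deconc {A : Type*} {K : Type*} [CommRing K] [Algebra ℚ K]
    (p : List A →₀ K) : (List A × List A) →₀ K :=
  p.sum fun w a => ∑ k ∈ Finset.range (w.length + 1),
    Finsupp.single (w.take k, w.drop k) a

/-- The tensor product `p ⊗ q` of two polynomials, as a function on pairs of words. -/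
noncomputable def tensP {A : Type*} {K : Type*} [CommRing K] [Algebra ℚ K]
    (p q : List A →₀ K) : (List A × List A) →₀ K :=
  p.sum fun u a => q.sum fun v b => Finsupp.single (u, v) (a * b)

/-!
Write `v = v'·c`, so that `u ≻ v = sh(u ⊗ v')·c`. Cutting a word `w·c` either puts the empty word
on the right or cuts `w` and keeps `c` on the right, hence
`δ'(u ≻ v) = (u ≻ v) ⊗ e + (id ⊗ ·c) δ'(sh(u ⊗ v'))`. Deconcatenation is compatible with the
shuffle, `δ'(sh(u ⊗ v')) = Σ sh(u₍₁₎ ⊗ v'₍₁₎) ⊗ sh(u₍₂₎ ⊗ v'₍₂₎)` (induction on the first letters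
of `u` and `v'`), and appending `c` turns each `sh(u₍₂₎ ⊗ v'₍₂₎)·c` into `u₍₂₎ ≻ v₍₂₎`.
All identities already hold for multisets of words, counted with multiplicity.
-/

lemma Multiset.range_succ_eq_cons_map (n : ℕ) :
    Multiset.range (n + 1) = 0 ::ₘ (Multiset.range n).map (· + 1) := by
  rw [Multiset.range, List.range_succ_eq_map]
  rfl

lemma Multiset.bind_range_succ {β : Type*} (n : ℕ) (f : ℕ → Multiset β) :
    (Multiset.range (n + 1)).bind f = f 0 + (Multiset.range n).bind (fun i => f (i + 1)) := by
  rw [Multiset.range_succ_eq_cons_map, Multiset.cons_bind, Multiset.bind_map]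

section Product

variable {α β γ : Type*}

lemma Multiset.map_product_left (f : α → γ) (s : Multiset α) (t : Multiset β) :
    s.map f ×ˢ t = (s ×ˢ t).map (Prod.map f id) := by
  simp [SProd.sprod, Multiset.product, Multiset.map_bind, Multiset.bind_map]

lemma Multiset.map_product_right (f : β → γ) (s : Multiset α) (t : Multiset β) :
    s ×ˢ t.map f = (s ×ˢ t).map (Prod.map id f) := by
  simp [SProd.sprod, Multiset.product, Multiset.map_bind]

lemma Multiset.singleton_product_eq_map (a : α) (t : Multiset β) :
    {a} ×ˢ t = t.map (Prod.mk a) := by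
  simp [SProd.sprod, Multiset.product]

lemma Multiset.product_singleton_eq_map (s : Multiset α) (b : β) :
    s ×ˢ {b} = s.map (·, b) := by
  simp [SProd.sprod, Multiset.product, Multiset.bind_singleton]

end Product

section Words

variable {A : Type*}

@[simp] lemma shuffle_nil_left (v : List A) : shuffle [] v = {v} := by
  cases v <;> simp [shuffle]

@[simp] lemma shuffle_nil_right (u : List A) : shuffle u [] = {u} := by
  cases u <;> simp [shuffle]

lemma shuffle_cons_cons (a b : A) (u v : List A) :
    shuffle (a :: u) (b :: v) =
      (shuffle u (b :: v)).map (a :: ·) + (shuffle (a :: u) v).map (b :: ·) := by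
  rw [shuffle]

lemma succW_concat (u v : List A) (c : A) : succW u (v ++ [c]) = (shuffle u v).map (· ++ [c]) := by
  rw [succW, List.getLast?_concat, List.dropLast_concat]

def deconcW (w : List A) : Multiset (List A × List A) :=
  (Multiset.range (w.length + 1)).map fun k => (w.take k, w.drop k)

lemma deconcW_cons (c : A) (w : List A) :
    deconcW (c :: w) = ([], c :: w) ::ₘ (deconcW w).map (Prod.map (c :: ·) id) := by
  rw [deconcW, List.length_cons, Multiset.range_succ_eq_cons_map, Multiset.map_cons,
    Multiset.map_map, deconcW, Multiset.map_map]
  rfl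

lemma deconcW_concat (w : List A) (c : A) :
    deconcW (w ++ [c]) = (w ++ [c], []) ::ₘ (deconcW w).map (Prod.map id (· ++ [c])) := by
  rw [deconcW, List.length_append, List.length_singleton, Multiset.range_succ, Multiset.map_cons,
    deconcW, Multiset.map_map]
  congr 1
  · simp
  refine Multiset.map_congr rfl fun k hk => ?_
  have hk : k ≤ w.length := Nat.lt_succ_iff.mp (Multiset.mem_range.mp hk)
  simp [List.take_append_of_le_length hk, List.drop_append_of_le_length hk]

def shuffleDeconcW (u v : List A) : Multiset (List A × List A) :=
  (Multiset.range (u.length + 1)).bind fun i => (Multiset.range (v.length + 1)).bind fun j =>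
    shuffle (u.take i) (v.take j) ×ˢ shuffle (u.drop i) (v.drop j)

lemma bind_deconcW_shuffle_cons_cons (a b : A) (u v : List A) :
    (shuffle (a :: u) (b :: v)).bind deconcW =
      (shuffle (a :: u) (b :: v)).map (Prod.mk []) +
      ((shuffle u (b :: v)).bind deconcW).map (Prod.map (a :: ·) id) +
      ((shuffle (a :: u) v).bind deconcW).map (Prod.map (b :: ·) id) := by
  simp only [shuffle_cons_cons a b, Multiset.add_bind, Multiset.bind_map, deconcW_cons,
    ← Multiset.singleton_add, Multiset.bind_add, Multiset.bind_singleton, Multiset.map_add,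
    Multiset.map_map, Multiset.map_bind, Function.comp_def]
  abel

lemma shuffleDeconcW_cons_cons (a b : A) (u v : List A) :
    shuffleDeconcW (a :: u) (b :: v) =
      (shuffle (a :: u) (b :: v)).map (Prod.mk []) +
      (shuffleDeconcW u (b :: v)).map (Prod.map (a :: ·) id) +
      (shuffleDeconcW (a :: u) v).map (Prod.map (b :: ·) id) := by
  simp only [shuffleDeconcW, List.length_cons, Multiset.bind_range_succ (u.length + 1),
    Multiset.bind_range_succ (v.length + 1)]
  simp only [List.take_succ_cons, List.drop_succ_cons, List.take_zero, List.drop_zero,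
    shuffle_nil_left, shuffle_nil_right, shuffle_cons_cons a b, Multiset.add_product,
    Multiset.map_product_left, Multiset.map_add, Multiset.map_bind, Multiset.map_map,
    Multiset.bind_add, Multiset.singleton_product_eq_map, Function.comp_def, Prod.map_apply, id]
  abel

theorem bind_deconcW_shuffle (u v : List A) :
    (shuffle u v).bind deconcW = shuffleDeconcW u v := by
  induction u, v using shuffle.induct with
  | case1 v => simp [shuffleDeconcW, deconcW, Multiset.singleton_product_eq_map]
  | case2 u => simp [shuffleDeconcW, deconcW, Multiset.singleton_product_eq_map]
  | case3 a u b v ih₁ ih₂ =>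
    rw [bind_deconcW_shuffle_cons_cons, ih₁, ih₂, shuffleDeconcW_cons_cons]

theorem bind_deconcW_succW (u v : List A) (hv : v ≠ []) :
    (succW u v).bind deconcW = succW u v ×ˢ {[]} +
      (Multiset.range (u.length + 1)).bind fun i => (Multiset.range v.length).bind fun j =>
        shuffle (u.take i) (v.take j) ×ˢ succW (u.drop i) (v.drop j) := by
  obtain ⟨v, c, rfl⟩ := (List.eq_nil_or_concat' v).resolve_left hv
  rw [Multiset.product_singleton_eq_map, succW_concat, Multiset.bind_map]
  simp only [deconcW_concat, ← Multiset.singleton_add, Multiset.bind_add, Multiset.bind_singleton,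
    Multiset.map_map, Function.comp_def, ← Multiset.map_bind, bind_deconcW_shuffle,
    shuffleDeconcW, List.length_append, List.length_singleton]
  congr 1
  simp only [Multiset.map_bind]
  refine Multiset.bind_congr fun i _ => Multiset.bind_congr fun j hj => ?_
  have hj : j ≤ v.length := Nat.lt_succ_iff.mp (Multiset.mem_range.mp hj)
  rw [List.take_append_of_le_length hj, List.drop_append_of_le_length hj, succW_concat,
    Multiset.map_product_right]

end Words

section OfMultiset

variable (K : Type*) [Semiring K] {α : Type*}

noncomputable def ofMultiset (m : Multiset α) : α →₀ K :=
  (m.map fun x => Finsupp.single x 1).sum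

variable {K}

@[simp] lemma ofMultiset_zero : ofMultiset K (0 : Multiset α) = 0 := by
  simp [ofMultiset]

@[simp] lemma ofMultiset_add (s t : Multiset α) :
    ofMultiset K (s + t) = ofMultiset K s + ofMultiset K t := by
  simp [ofMultiset]

lemma ofMultiset_cons (x : α) (s : Multiset α) :
    ofMultiset K (x ::ₘ s) = Finsupp.single x 1 + ofMultiset K s := by
  simp [ofMultiset]

lemma ofMultiset_singleton (x : α) : ofMultiset K {x} = Finsupp.single x 1 := by
  simp [ofMultiset]

lemma sum_ofMultiset {ι : Type*} (s : Finset ι) (f : ι → Multiset α) :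
    ∑ i ∈ s, ofMultiset K (f i) = ofMultiset K (s.val.bind f) := by
  simp only [ofMultiset, Multiset.map_bind, Multiset.sum_bind]
  rfl

end OfMultiset

section Polynomials

variable {A K : Type*} [CommRing K] [Algebra ℚ K]

lemma succS_eq_ofMultiset (u v : List A) : succS K u v = ofMultiset K (succW u v) := rfl

lemma shS_eq_ofMultiset (u v : List A) : shS K u v = ofMultiset K (shuffle u v) := rfl

lemma deconc_zero : deconc (0 : List A →₀ K) = 0 := Finsupp.sum_zero_index

lemma deconc_add (p q : List A →₀ K) : deconc (p + q) = deconc p + deconc q :=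
  Finsupp.sum_add_index' (fun _ => by simp) fun _ _ _ => by
    simp [Finsupp.single_add, Finset.sum_add_distrib]

lemma deconc_single_one (w : List A) :
    deconc (Finsupp.single w (1 : K)) = ofMultiset K (deconcW w) := by
  rw [deconc, Finsupp.sum_single_index (by simp), ofMultiset, deconcW, Multiset.map_map]
  rfl

lemma deconc_ofMultiset (m : Multiset (List A)) :
    deconc (ofMultiset K m) = ofMultiset K (m.bind deconcW) := by
  induction m using Multiset.induction_on with
  | empty => simp [deconc_zero]
  | cons w m ih =>
    rw [ofMultiset_cons, deconc_add, ih, deconc_single_one, Multiset.cons_bind, ofMultiset_add]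

lemma tensP_zero_left (q : List A →₀ K) : tensP 0 q = 0 := Finsupp.sum_zero_index

lemma tensP_zero_right (p : List A →₀ K) : tensP p 0 = 0 := by
  simp [tensP]

lemma tensP_add_left (p₁ p₂ q : List A →₀ K) :
    tensP (p₁ + p₂) q = tensP p₁ q + tensP p₂ q :=
  Finsupp.sum_add_index' (fun _ => by simp) fun _ _ _ => by
    rw [← Finsupp.sum_add]
    simp [add_mul, Finsupp.single_add]

lemma tensP_add_right (p q₁ q₂ : List A →₀ K) :
    tensP p (q₁ + q₂) = tensP p q₁ + tensP p q₂ := by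
  rw [tensP, tensP, tensP, ← Finsupp.sum_add]
  refine Finsupp.sum_congr fun _ _ => Finsupp.sum_add_index' (fun _ => by simp) fun _ _ _ => ?_
  rw [mul_add, Finsupp.single_add]

lemma tensP_single_single (u v : List A) (a b : K) :
    tensP (Finsupp.single u a) (Finsupp.single v b) = Finsupp.single (u, v) (a * b) := by
  simp [tensP]

lemma tensP_single_one_ofMultiset (u : List A) (n : Multiset (List A)) :
    tensP (Finsupp.single u (1 : K)) (ofMultiset K n) = ofMultiset K (n.map (Prod.mk u)) := by
  induction n using Multiset.induction_on with
  | empty => simp [tensP_zero_right]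
  | cons v n ih =>
    rw [ofMultiset_cons, tensP_add_right, ih, tensP_single_single, mul_one, Multiset.map_cons,
      ofMultiset_cons]

lemma tensP_ofMultiset (m n : Multiset (List A)) :
    tensP (ofMultiset K m) (ofMultiset K n) = ofMultiset K (m ×ˢ n) := by
  induction m using Multiset.induction_on with
  | empty => simp [tensP_zero_left]
  | cons u m ih =>
    rw [ofMultiset_cons, tensP_add_left, ih, tensP_single_one_ofMultiset, Multiset.cons_product,
      ofMultiset_add]

end Polynomials

/-- deconcatenation of a half-shuffle: for words `u, v` with `|v| ≥ 1`,
`δ'(u ≻ v) = (u ≻ v) ⊗ e + Σ sh(u₍₁₎ ⊗ v₍₁₎) ⊗ (u₍₂₎ ≻ v₍₂₎)`, the sum over the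
deconcatenation components with `|v₍₂₎| ≥ 1`. -/
theorem deconc_half_shuffle {A : Type*} {K : Type*} [CommRing K] [Algebra ℚ K]
    (u v : List A) (hv : v ≠ []) :
    deconc (succS K u v) =
      tensP (succS K u v) (Finsupp.single [] 1) +
      ∑ i ∈ Finset.range (u.length + 1), ∑ j ∈ Finset.range v.length,
        tensP (shS K (u.take i) (v.take j)) (succS K (u.drop i) (v.drop j)) := by
  simp only [succS_eq_ofMultiset, shS_eq_ofMultiset, ← ofMultiset_singleton, tensP_ofMultiset,
    deconc_ofMultiset, sum_ofMultiset, ← ofMultiset_add, Finset.range_val]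
  rw [bind_deconcW_succW u v hv]
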